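/- Let $W_H$ be the Weyl group of type $B_m$ realized as the group of signed permutations of $\{1,\dots,m\}$ (i.e., the hyperoctahedral group $C_2 \wr S_m$), and let $W_L \cong S_m$ be its subgroup of unsigned permutations. Then the character of $W_H$ induced from the sign character of $W_L$ is multiplicity free. -/

import Mathlib

/-!
Gelfand's trick. Put `e = |Sₘ|⁻¹ ∑ sgn(σ) σ` in `ℂ[W_H]`. The multiplicity of a simple `V` in the
induced character is `|Sₘ|⁻¹ ∑ sgn(σ) χ_V(σ) = tr(e | V) = dim eV`. Every signed permutation `g`
satisfies `σ g σ = g⁻¹` for an unsigned `σ` (the inverse of the permutation underlying `g`), so the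
antipode `g ↦ g⁻¹` fixes the corner algebra `e ℂ[W_H] e` pointwise; being an anti-automorphism it
forces the corner to be commutative. As `V` is simple, `eV` is a cyclic module over this commutative
corner, on which every element then acts by a scalar, so `dim eV ≤ 1`.
-/

open scoped Classical
open CategoryTheory

noncomputable section

/-- The fixed-point-free involution `(x, s) ↦ (x, s + 1)` on `Fin m × ZMod 2`.
The hyperoctahedral group `C₂ ≀ Sₘ` is its centralizer in `Perm (Fin m × ZMod 2)`. -/
def flipPerm (m : ℕ) : Equiv.Perm (Fin m × ZMod 2) :=
  Equiv.prodCongr (Equiv.refl (Fin m)) (Equiv.addLeft (1 : ZMod 2))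

/-- The embedding of `Sₘ` as the subgroup of unsigned permutations. -/
def permEmb (m : ℕ) : Equiv.Perm (Fin m) →* Equiv.Perm (Fin m × ZMod 2) where
  toFun σ := Equiv.prodCongr σ (Equiv.refl (ZMod 2))
  map_one' := Equiv.ext fun x => rfl
  map_mul' σ τ := Equiv.ext fun x => rfl

/-- The hyperoctahedral group `W_H = C₂ ≀ Sₘ` realized as signed permutations. -/
abbrev WH (m : ℕ) : Subgroup (Equiv.Perm (Fin m × ZMod 2)) :=
  Subgroup.centralizer {flipPerm m}

/-- Extension by zero of the sign character of `W_L ≅ Sₘ` to the ambient group. -/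
def sgnExt (m : ℕ) (g : Equiv.Perm (Fin m × ZMod 2)) : ℂ :=
  ∑ σ : Equiv.Perm (Fin m), if permEmb m σ = g then ((Equiv.Perm.sign σ : ℤ) : ℂ) else 0

/-- The class function of `W_H` induced from the sign character of `W_L ≅ Sₘ`. -/
def indSgn (m : ℕ) (h : WH m) : ℂ :=
  (Nat.card (Equiv.Perm (Fin m)) : ℂ)⁻¹ *
    ∑ x : WH m,
      sgnExt m ((x : Equiv.Perm (Fin m × ZMod 2))⁻¹ *
        (h : Equiv.Perm (Fin m × ZMod 2)) * (x : Equiv.Perm (Fin m × ZMod 2)))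

open MonoidAlgebra HopfAlgebra

section Gelfand

variable {k A M : Type*} [Field k] [Ring A] [Algebra k A] [AddCommGroup M] [Module k M]
  (π : A →ₐ[k] Module.End k M) {e : A}

theorem corner_apply_eq_of_apply_eq (he : IsIdempotentElem e) {u w : M}
    (hu : u ∈ LinearMap.range (π e)) (hw : w ∈ LinearMap.range (π e)) {a : A}
    (ha : π a u = w) : π (e * a * e) u = w := by
  have hP : IsIdempotentElem (π e) := he.map π
  have hu' : π e u = u := (LinearMap.IsIdempotentElem.mem_range_iff hP).mp hu
  have hw' : π e w = w := (LinearMap.IsIdempotentElem.mem_range_iff hP).mp hw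
  rw [map_mul, map_mul, Module.End.mul_apply, Module.End.mul_apply, hu', ha, hw']

variable [FiniteDimensional k M] [IsAlgClosed k]

/-- Schur's lemma for the corner: an eigenvector of `e * x * e` on `range (π e)` generates that
space over the commutative corner, so its eigenvalue spreads to all of it. -/
theorem exists_corner_apply_eq_smul (hπ : ∀ v : M, v ≠ 0 → ∀ w, ∃ a, π a v = w)
    (he : IsIdempotentElem e) (hcomm : ∀ a b : A, Commute (e * a * e) (e * b * e)) (x : A) :
    ∃ c : k, ∀ w ∈ LinearMap.range (π e), π (e * x * e) w = c • w := by
  set U := LinearMap.range (π e)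
  rcases subsingleton_or_nontrivial U with hU | hU
  · refine ⟨0, fun w hw => ?_⟩
    have hw0 : w = 0 := congrArg Subtype.val (Subsingleton.elim (⟨w, hw⟩ : U) 0)
    simp [hw0]
  have hmaps : ∀ w ∈ U, π (e * x * e) w ∈ U := fun w _ =>
    ⟨π (x * e) w, by simp only [mul_assoc, map_mul, Module.End.mul_apply]⟩
  obtain ⟨c, hc⟩ := Module.End.exists_eigenvalue ((π (e * x * e)).restrict hmaps)
  obtain ⟨⟨w₀, hw₀U⟩, hw₀⟩ := hc.exists_hasEigenvector
  have hw₀0 : w₀ ≠ 0 := fun h => hw₀.2 (Subtype.ext h)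
  have hxw₀ : π (e * x * e) w₀ = c • w₀ := congrArg Subtype.val hw₀.apply_eq_smul
  refine ⟨c, fun w hw => ?_⟩
  obtain ⟨a, ha⟩ := hπ w₀ hw₀0 w
  rw [← corner_apply_eq_of_apply_eq π he hw₀U hw ha, ← Module.End.mul_apply, ← map_mul,
    (hcomm x a).eq, map_mul, Module.End.mul_apply, hxw₀, map_smul]

theorem finrank_range_le_one_of_commute (hπ : ∀ v : M, v ≠ 0 → ∀ w, ∃ a, π a v = w)
    (he : IsIdempotentElem e) (hcomm : ∀ a b : A, Commute (e * a * e) (e * b * e)) :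
    Module.finrank k (LinearMap.range (π e)) ≤ 1 := by
  rcases eq_or_ne (LinearMap.range (π e)) ⊥ with hU | hU
  · rw [hU, finrank_bot]
    exact zero_le_one
  obtain ⟨u, hu, hu0⟩ := Submodule.exists_mem_ne_zero_of_ne_bot hU
  have hspan : LinearMap.range (π e) ≤ k ∙ u := fun w hw => by
    obtain ⟨a, ha⟩ := hπ u hu0 w
    obtain ⟨c, hc⟩ := exists_corner_apply_eq_smul π hπ he hcomm a
    rw [← corner_apply_eq_of_apply_eq π he hu hw ha, hc u hu]
    exact Submodule.smul_mem _ c (Submodule.mem_span_singleton_self u)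
  exact (Submodule.finrank_mono hspan).trans (finrank_span_singleton hu0).le

end Gelfand

section TwistedAverage

variable {k A H : Type*} [Field k] [Ring A] [Algebra k A] [Group H] [Fintype H]
  {φ : H →* A} {χ : H →* ℤˣ}

variable (k φ χ) in
def twistedAverage : A :=
  (Nat.card H : k)⁻¹ • ∑ h : H, χ h • φ h

theorem twistedAverage_mul (h : H) :
    twistedAverage k φ χ * φ h = χ h • twistedAverage k φ χ := by
  have hsum : (∑ x, χ x • φ x) * φ h = χ h • ∑ x, χ x • φ x := by
    rw [Finset.sum_mul, ← Equiv.sum_comp (Equiv.mulRight h) (fun x => χ x • φ x),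
      Finset.smul_sum]
    refine Finset.sum_congr rfl fun x _ => ?_
    rw [Equiv.coe_mulRight, map_mul, map_mul, smul_mul_assoc, smul_smul, mul_left_comm,
      Int.units_mul_self, mul_one]
  rw [twistedAverage, smul_mul_assoc, hsum, smul_comm]

theorem mul_twistedAverage (h : H) :
    φ h * twistedAverage k φ χ = χ h • twistedAverage k φ χ := by
  have hsum : φ h * (∑ x, χ x • φ x) = χ h • ∑ x, χ x • φ x := by
    rw [Finset.mul_sum, ← Equiv.sum_comp (Equiv.mulLeft h) (fun x => χ x • φ x),
      Finset.smul_sum]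
    refine Finset.sum_congr rfl fun x _ => ?_
    rw [Equiv.coe_mulLeft, map_mul, map_mul, mul_smul_comm, smul_smul, ← mul_assoc,
      Int.units_mul_self, one_mul]
  rw [twistedAverage, mul_smul_comm, hsum, smul_comm]

theorem isIdempotentElem_twistedAverage [CharZero k] :
    IsIdempotentElem (twistedAverage k φ χ) := by
  have hterm : ∀ h, twistedAverage k φ χ * (χ h • φ h) = twistedAverage k φ χ := fun h => by
    rw [mul_smul_comm, twistedAverage_mul, smul_smul, Int.units_mul_self, one_smul]
  unfold IsIdempotentElem
  nth_rewrite 2 [twistedAverage]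
  rw [mul_smul_comm, Finset.mul_sum, Finset.sum_congr rfl fun h _ => hterm h, Finset.sum_const,
    Finset.card_univ, ← Nat.card_eq_fintype_card, ← Nat.cast_smul_eq_nsmul k, smul_smul,
    inv_mul_cancel₀ (Nat.cast_ne_zero.mpr Nat.card_pos.ne'), one_smul]

end TwistedAverage

theorem Representation.IsIrreducible.exists_asAlgebraHom_apply_eq {k G W : Type*} [Field k]
    [Monoid G] [AddCommGroup W] [Module k W] {ρ : Representation k G W} (hρ : ρ.IsIrreducible)
    {v : W} (hv : v ≠ 0) (w : W) : ∃ a : MonoidAlgebra k G, ρ.asAlgebraHom a v = w :=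
  IsSimpleModule.toSpanSingleton_surjective (MonoidAlgebra k G)
    (ρ.asModuleEquiv.symm.map_ne_zero_iff.mpr hv) (ρ.asModuleEquiv.symm w)

namespace FDRep

variable {k G : Type*} [Field k] [Monoid G]

def subrepresentationι {V : FDRep k G} (σ : Subrepresentation V.ρ) :
    FDRep.of σ.toRepresentation ⟶ V where
  hom := FGModuleCat.ofHom σ.toSubmodule.subtype
  comm _ := rfl

instance {V : FDRep k G} (σ : Subrepresentation V.ρ) : Mono (subrepresentationι σ) :=
  ConcreteCategory.mono_of_injective _ Subtype.val_injective

theorem isIrreducible_of_simple (V : FDRep k G) [Simple V] :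
    Representation.IsIrreducible V.ρ where
  exists_pair_ne := by
    refine ⟨⊥, ⊤, fun h => id_nonzero V ?_⟩
    ext v
    have hv : v ∈ (⊥ : Subrepresentation V.ρ) := h ▸ Submodule.mem_top
    simp [(Submodule.mem_bot k).mp hv]
  eq_bot_or_eq_top σ := by
    refine or_iff_not_imp_left.mpr fun hσ => ?_
    have hι : subrepresentationι σ ≠ 0 := fun h0 => hσ <|
      Subrepresentation.toSubmodule_injective <| eq_bot_iff.mpr fun v hv =>
        (Submodule.mem_bot k).mpr (congrArg (fun f => f ⟨v, hv⟩) h0)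
    have := isIso_of_mono_of_nonzero hι
    refine Subrepresentation.toSubmodule_injective (eq_top_iff.mpr fun v _ => ?_)
    obtain ⟨w, rfl⟩ := (ConcreteCategory.bijective_of_isIso (subrepresentationι σ)).2 v
    exact w.2

end FDRep

section GroupAlgebra

variable {k G H : Type*} [Field k] [Group G] [Group H] [Fintype H] {ι : H →* G} {χ : H →* ℤˣ}

local notation "𝐞" => twistedAverage k (MonoidHom.comp (MonoidAlgebra.of k G) ι) χ

theorem antipode_twistedAverage : antipode k 𝐞 = 𝐞 := by
  simp only [twistedAverage, map_smul, map_sum, MonoidHom.comp_apply, of_apply]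
  congr 1
  exact Fintype.sum_equiv (Equiv.inv H) _ _ fun h => by simp

theorem antipode_corner (hinv : ∀ g : G, ∃ h : H, ι h * g * ι h = g⁻¹) (a : MonoidAlgebra k G) :
    antipode k (𝐞 * a * 𝐞) = 𝐞 * a * 𝐞 := by
  induction a using MonoidAlgebra.induction_linear with
  | zero => simp
  | add a b ha hb => simp only [mul_add, add_mul, map_add, ha, hb]
  | single g r =>
    obtain ⟨h, hh⟩ := hinv g
    have hflip : single g⁻¹ r =
        (MonoidAlgebra.of k G).comp ι h * single g r * (MonoidAlgebra.of k G).comp ι h := by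
      rw [MonoidHom.comp_apply, of_apply, single_mul_single, single_mul_single, hh, one_mul,
        mul_one]
    rw [antipode_mul_antidistrib, antipode_mul_antidistrib, antipode_twistedAverage,
      antipode_single, CommSemiring.antipode_eq_id, LinearMap.id_apply, hflip]
    simp only [mul_assoc, mul_twistedAverage, mul_smul_comm]
    rw [← mul_assoc 𝐞, twistedAverage_mul, smul_mul_assoc, smul_smul, Int.units_mul_self,
      one_smul]

theorem commute_corner [CharZero k] (hinv : ∀ g : G, ∃ h : H, ι h * g * ι h = g⁻¹)
    (a b : MonoidAlgebra k G) : Commute (𝐞 * a * 𝐞) (𝐞 * b * 𝐞) := by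
  have he : IsIdempotentElem 𝐞 := isIdempotentElem_twistedAverage
  have hprod : 𝐞 * a * 𝐞 * (𝐞 * b * 𝐞) = 𝐞 * (a * 𝐞 * b) * 𝐞 := by
    simp only [mul_assoc, ← mul_assoc 𝐞 𝐞, he.eq]
  have := antipode_corner (χ := χ) hinv (a * 𝐞 * b)
  rw [← hprod, antipode_mul_antidistrib, antipode_corner hinv, antipode_corner hinv] at this
  exact this.symm

theorem FDRep.trace_twistedAverage (V : FDRep k G) :
    LinearMap.trace k V (Representation.asAlgebraHom V.ρ 𝐞)
      = (Nat.card H : k)⁻¹ * ∑ h, χ h • V.character (ι h) := by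
  simp only [twistedAverage, map_smul, map_sum, Units.smul_def, map_zsmul, MonoidHom.comp_apply,
    Representation.asAlgebraHom_of, smul_eq_mul]
  rfl

theorem FDRep.twistedAverage_character_eq_zero_or_one [IsAlgClosed k] [CharZero k]
    (V : FDRep k G) [Simple V] (hinv : ∀ g : G, ∃ h : H, ι h * g * ι h = g⁻¹) :
    (Nat.card H : k)⁻¹ * ∑ h, χ h • V.character (ι h) = 0 ∨
      (Nat.card H : k)⁻¹ * ∑ h, χ h • V.character (ι h) = 1 := by
  have hP : IsIdempotentElem (Representation.asAlgebraHom V.ρ 𝐞) :=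
    isIdempotentElem_twistedAverage.map _
  have hle := finrank_range_le_one_of_commute _
    (fun v hv w => (isIrreducible_of_simple V).exists_asAlgebraHom_apply_eq hv w)
    isIdempotentElem_twistedAverage (commute_corner (χ := χ) hinv)
  rw [← trace_twistedAverage, (LinearMap.IsIdempotentElem.isProj_range _ hP).trace]
  rcases Nat.le_one_iff_eq_zero_or_eq_one.mp hle with h | h <;> simp [h]

end GroupAlgebra

theorem Fintype.sum_sum_conj_mul {G R : Type*} [Group G] [Fintype G] [NonUnitalNonAssocSemiring R]
    (ψ f : G → R) (hf : ∀ x g, f (x⁻¹ * g * x) = f g) :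
    ∑ g, (∑ x, ψ (x⁻¹ * g * x)) * f g = Fintype.card G • ∑ g, ψ g * f g := by
  simp_rw [Finset.sum_mul]
  rw [Finset.sum_comm, ← Finset.card_univ, ← Finset.sum_const]
  exact Finset.sum_congr rfl fun x _ =>
    Fintype.sum_equiv (MulAut.conj x⁻¹).toEquiv _ _ fun g => by simp [hf]

namespace WH

variable {m : ℕ}

section

variable {g : Equiv.Perm (Fin m × ZMod 2)}

theorem apply_mk (hg : g ∈ WH m) (i : Fin m) (s : ZMod 2) :
    g (i, s) = ((g (i, 0)).1, (g (i, 0)).2 + s) := by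
  have hflip := congrArg (· (i, 0)) (Subgroup.mem_centralizer_singleton_iff.mp hg)
  rcases (by decide : ∀ s : ZMod 2, s = 0 ∨ s = 1) s with rfl | rfl
  · rw [add_zero]
  · simpa [flipPerm, add_comm, Prod.map] using hflip

theorem fst_apply_mk (hg : g ∈ WH m) (i : Fin m) (s : ZMod 2) :
    (g (i, s)).1 = (g (i, 0)).1 := by
  rw [apply_mk hg]

theorem mul_self_eq_one_of_fst_apply (hg : g ∈ WH m) (hfst : ∀ x, (g x).1 = x.1) :
    g * g = 1 := by
  ext ⟨i, s⟩ : 1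
  have hi : (g (i, 0)).1 = i := hfst (i, 0)
  rw [Equiv.Perm.mul_apply, apply_mk hg i, hi, apply_mk hg i, hi, ← add_assoc,
    CharTwo.add_self_eq_zero, zero_add, Equiv.Perm.one_apply]

theorem fst_apply_fst_inv_apply (hg : g ∈ WH m) (i : Fin m) (s : ZMod 2) :
    (g ((g⁻¹ (i, 0)).1, s)).1 = i := by
  rw [fst_apply_mk hg, ← fst_apply_mk hg _ (g⁻¹ (i, 0)).2, Prod.mk.eta, ← Equiv.Perm.mul_apply,
    mul_inv_cancel, Equiv.Perm.one_apply]

end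

def basePerm (g : WH m) : Equiv.Perm (Fin m) where
  toFun i := ((g : Equiv.Perm (Fin m × ZMod 2)) (i, 0)).1
  invFun i := ((g : Equiv.Perm (Fin m × ZMod 2))⁻¹ (i, 0)).1
  left_inv i := by simpa only [inv_inv] using fst_apply_fst_inv_apply (inv_mem g.2) i 0
  right_inv i := fst_apply_fst_inv_apply g.2 i 0

theorem permEmb_mem (σ : Equiv.Perm (Fin m)) : permEmb m σ ∈ WH m :=
  Subgroup.mem_centralizer_singleton_iff.mpr (Equiv.ext fun _ => rfl)

def ofPerm (m : ℕ) : Equiv.Perm (Fin m) →* WH m :=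
  (permEmb m).codRestrict (WH m) permEmb_mem

theorem exists_ofPerm_mul_mul_eq_inv (g : WH m) :
    ∃ σ, ofPerm m σ * g * ofPerm m σ = g⁻¹ := by
  refine ⟨(basePerm g)⁻¹, ?_⟩
  have hsq : g * ofPerm m (basePerm g)⁻¹ * (g * ofPerm m (basePerm g)⁻¹) = 1 :=
    Subtype.ext <| mul_self_eq_one_of_fst_apply (mul_mem g.2 (permEmb_mem _))
      fun x => fst_apply_fst_inv_apply g.2 x.1 x.2
  rw [mul_assoc, ← mul_assoc (ofPerm m _)] at hsq
  exact eq_inv_of_mul_eq_one_right hsq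

theorem sum_sgnExt_mul (f : WH m → ℂ) :
    ∑ h : WH m, sgnExt m h * f h = ∑ σ, ((Equiv.Perm.sign σ : ℤ) : ℂ) * f (ofPerm m σ) := by
  simp only [sgnExt, Finset.sum_mul, ite_mul, zero_mul]
  rw [Finset.sum_comm]
  refine Finset.sum_congr rfl fun σ _ => ?_
  have hcoe : ∀ h : WH m, permEmb m σ = h ↔ ofPerm m σ = h := fun h =>
    (Subtype.ext_iff (a1 := ofPerm m σ)).symm
  simp only [hcoe, Finset.sum_ite_eq, Finset.mem_univ, if_true]

theorem inner_indSgn_character (V : FDRep ℂ (WH m)) :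
    (Nat.card (WH m) : ℂ)⁻¹ * (∑ h : WH m, indSgn m h * star (V.character h))
      = star ((Nat.card (Equiv.Perm (Fin m)) : ℂ)⁻¹ *
          ∑ σ, Equiv.Perm.sign σ • V.character (ofPerm m σ)) := by
  have hclass : ∀ x h : WH m, star (V.character (x⁻¹ * h * x)) = star (V.character h) :=
    fun x h => by simpa using congrArg star (V.char_conj h x⁻¹)
  have hsum := Fintype.sum_sum_conj_mul (fun h : WH m => sgnExt m h)
    (fun h => star (V.character h)) hclass
  have hind : ∀ h, indSgn m h * star (V.character h) = (Nat.card (Equiv.Perm (Fin m)) : ℂ)⁻¹ *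
      ((∑ x : WH m, sgnExt m ↑(x⁻¹ * h * x)) * star (V.character h)) := fun h => mul_assoc _ _ _
  have hcard : (Nat.card (WH m) : ℂ) ≠ 0 := Nat.cast_ne_zero.mpr Nat.card_pos.ne'
  rw [Finset.sum_congr rfl fun h _ => hind h, ← Finset.mul_sum, hsum, sum_sgnExt_mul,
    nsmul_eq_mul, ← Nat.card_eq_fintype_card, mul_left_comm _ (Nat.card (WH m) : ℂ),
    inv_mul_cancel_left₀ hcard]
  simp [star_sum, Units.smul_def]

end WH

/-- The character of the hyperoctahedral group `W_H` induced from the sign character of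
the symmetric subgroup `W_L ≅ Sₘ` is multiplicity free: every irreducible character of
`W_H` occurs with multiplicity `0` or `1`. -/
theorem stmt_2 (m : ℕ) (V : FDRep ℂ (WH m)) (hV : Simple V) :
    (Nat.card (WH m) : ℂ)⁻¹ * (∑ h : WH m, indSgn m h * star (V.character h)) = 0 ∨
    (Nat.card (WH m) : ℂ)⁻¹ * (∑ h : WH m, indSgn m h * star (V.character h)) = 1 := by
  rw [WH.inner_indSgn_character]
  rcases FDRep.twistedAverage_character_eq_zero_or_one (χ := Equiv.Perm.sign) V
    WH.exists_ofPerm_mul_mul_eq_inv with h | h <;> rw [h] <;> simp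

end
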